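/- arXiv:1605.01899 — 2 statements merged into one kernel-verified Lean document; each statement's English description precedes it below -/
import Mathlib

section
/- Let ν > 0, b > 0, and let m ≥ 0 be an integer. Then for every x > 0, ρ_{ν+m,b}(x) = (−b)^{−m} r_{m,ν}(b²x) ρ_{ν,b}(x) + (−b)^{1−m} s_{m,ν}(b²x) ρ_{ν+1,b}(x). -/
open MeasureTheory Real Filter Set Finset

/-- Modified Bessel function of the first kind. -/
noncomputable def besselI (μ z : ℝ) : ℝ :=
  (z / 2) ^ μ * ∑' k : ℕ, (z ^ 2 / 4) ^ k / (Nat.factorial k * Real.Gamma (μ + k + 1))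

/-- Modified Bessel function of the second kind. -/
noncomputable def besselK (ν z : ℝ) : ℝ :=
  ∫ t in Set.Ioi (0 : ℝ), Real.exp (-z * Real.cosh t) * Real.cosh (ν * t)

/-- Scaled modified Bessel function of the first kind. -/
noncomputable def omegaW (μ a x : ℝ) : ℝ := x ^ (μ / 2) * besselI μ (2 * a * Real.sqrt x)

/-- Scaled modified Bessel function of the second kind. -/
noncomputable def rhoW (ν b x : ℝ) : ℝ := x ^ (ν / 2) * besselK ν (2 * b * Real.sqrt x)

/-- Pochhammer symbol (rising factorial) for a real argument. -/
noncomputable def poch (t : ℝ) (k : ℕ) : ℝ := ∏ i ∈ Finset.range k, (t + i)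

/-- Pochhammer symbol (rising factorial) for a complex argument. -/
noncomputable def cpoch (t : ℂ) (k : ℕ) : ℂ := ∏ i ∈ Finset.range k, (t + i)

/-- The polynomial `r_{m,μ}` built from Lommel polynomials. -/
noncomputable def rPoly (μ : ℝ) (m : ℕ) (x : ℝ) : ℝ :=
  if m = 0 then 1
  else (-1 : ℝ) ^ m * ∑ j ∈ Finset.range (m / 2),
    ((m - j - 2).choose j : ℝ) * poch (μ + j + 2) (m - 2 * j - 2) * x ^ (j + 1)

/-- The polynomial `s_{m,μ}` built from Lommel polynomials. -/
noncomputable def sPoly (μ : ℝ) (m : ℕ) (x : ℝ) : ℝ :=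
  if m = 0 then 0
  else (-1 : ℝ) ^ (m + 1) * ∑ j ∈ Finset.range ((m + 1) / 2),
    ((m - j - 1).choose j : ℝ) * poch (μ + j + 1) (m - 2 * j - 1) * x ^ j

/-- The linear form `Q_n^{μ,ν,a,b}`. -/
noncomputable def Qmop (μ ν a b : ℝ) (n : ℕ) (x : ℝ) : ℝ :=
  (-1 : ℝ) ^ n * ∑ j ∈ Finset.range (n + 1),
    (n.choose j : ℝ) * (Real.Gamma (μ + ν + 1 + n) / Real.Gamma (μ + ν + 1 + j)) *
      ((a ^ 2 - b ^ 2) / a) ^ j * omegaW (μ + j) a x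

/-- The dual linear form `P_n^{μ,ν,a,b}`. -/
noncomputable def Pmop (μ ν a b : ℝ) (n : ℕ) (x : ℝ) : ℝ :=
  (-1 : ℝ) ^ n * (2 * (b ^ 2 - a ^ 2) ^ (μ + ν + 1) / (a ^ μ * b ^ ν * Nat.factorial n)) *
    ∑ j ∈ Finset.range (n + 1),
      (n.choose j : ℝ) * ((a ^ 2 - b ^ 2) / b) ^ j * rhoW (ν + j) b x /
        Real.Gamma (μ + ν + 1 + j)

/-- Monic generalized Laguerre polynomial. -/
noncomputable def laguerreM (α : ℝ) (n : ℕ) (x : ℝ) : ℝ :=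
  (-1 : ℝ) ^ n * ∑ j ∈ Finset.range (n + 1),
    (n.choose j : ℝ) * (Real.Gamma (α + 1 + n) / Real.Gamma (α + 1 + j)) * (-x) ^ j

/-- `Q` with integer index, vanishing for negative index. -/
noncomputable def QmopZ (μ ν a b : ℝ) (m : ℤ) (x : ℝ) : ℝ :=
  if 0 ≤ m then Qmop μ ν a b m.toNat x else 0

/-- `P` with integer index, vanishing for negative index. -/
noncomputable def PmopZ (μ ν a b : ℝ) (m : ℤ) (x : ℝ) : ℝ :=
  if 0 ≤ m then Pmop μ ν a b m.toNat x else 0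

/-- `f` has a sign change at `x₀`: it takes both positive and negative values in
every neighborhood of `x₀`. -/
def SignChangeAt (f : ℝ → ℝ) (x₀ : ℝ) : Prop :=
  ∀ ε > 0, (∃ y, |y - x₀| < ε ∧ 0 < f y) ∧ (∃ y, |y - x₀| < ε ∧ f y < 0)

/-- Recurrence coefficient `a_{2,m}`. -/
noncomputable def coefA2 (μ ν a b m : ℝ) : ℝ := (a / (b ^ 2 - a ^ 2)) ^ 2

/-- Recurrence coefficient `a_{1,m}`. -/
noncomputable def coefA1 (μ ν a b m : ℝ) : ℝ :=
  2 * (μ + ν + 2 * m + 2) * (a / (b ^ 2 - a ^ 2)) ^ 2 + (μ + m + 1) / (b ^ 2 - a ^ 2)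

/-- Recurrence coefficient `a_{0,m}`. -/
noncomputable def coefA0 (μ ν a b m : ℝ) : ℝ :=
  (6 * m ^ 2 + 6 * (μ + ν + 1) * m + (μ + ν + 1) * (μ + ν + 2)) * (a / (b ^ 2 - a ^ 2)) ^ 2 +
    (3 * m ^ 2 + (4 * μ + 2 * ν + 3) * m + (μ + 1) * (μ + ν + 1)) / (b ^ 2 - a ^ 2)

/-- Recurrence coefficient `a_{-1,m}`. -/
noncomputable def coefAm1 (μ ν a b m : ℝ) : ℝ :=
  m * (μ + ν + m) * (2 * (μ + ν + 2) * (b / (b ^ 2 - a ^ 2)) ^ 2 - (ν + m) / (b ^ 2 - a ^ 2))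

/-- Recurrence coefficient `a_{-2,m}`. -/
noncomputable def coefAm2 (μ ν a b m : ℝ) : ℝ :=
  (m - 1) * m * (μ + ν + m - 1) * (μ + ν + m) * (b / (b ^ 2 - a ^ 2)) ^ 2

/-!
Integrating by parts in `K_ν(z) = ∫₀^∞ e^{-z cosh t} cosh(νt) dt` gives the recurrence
`K_{ν+2}(z) = K_ν(z) + 2(ν+1)/z · K_{ν+1}(z)`, i.e.
`ρ_{μ+2,b}(x) = (μ+1)/b · ρ_{μ+1,b}(x) + x ρ_{μ,b}(x)`.
Up to sign, `s_{m,ν}(y)` and `r_{m+1,ν}(y)/y` are Lommel-type polynomials, and Pascal's rule on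
their coefficients gives `p_{m+2}(y) = y p_m(y) - (ν+m+1) p_{m+1}(y)` for `p = r, s`. Hence both
sides of the expansion satisfy the same three-term recurrence in `m` and agree for `m = 0, 1`.
-/

section BesselK

variable {z : ℝ}

lemma eventually_neg_mul_cosh_add_mul_le_neg (hz : 0 < z) (c : ℝ) :
    ∀ᶠ t in atTop, -z * cosh t + c * t ≤ -t := by
  filter_upwards [eventually_ge_atTop (4 * |c + 1| / z)] with t ht
  have ht₀ : 0 ≤ t := le_trans (by positivity) ht
  have hcosh : 1 + t + t ^ 2 / 2 ≤ 2 * cosh t := by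
    rw [cosh_eq]
    nlinarith [quadratic_le_exp_of_nonneg ht₀, exp_pos (-t)]
  have hc : (c + 1) * t ≤ |c + 1| * t := mul_le_mul_of_nonneg_right (le_abs_self _) ht₀
  rw [div_le_iff₀ hz] at ht
  nlinarith [abs_nonneg (c + 1)]

lemma integrableOn_exp_neg_mul_cosh_add_mul (hz : 0 < z) (c : ℝ) :
    IntegrableOn (fun t => exp (-z * cosh t + c * t)) (Ioi 0) := by
  refine integrable_of_isBigO_exp_neg one_pos (by fun_prop) (Asymptotics.IsBigO.of_bound 1 ?_)
  filter_upwards [eventually_neg_mul_cosh_add_mul_le_neg hz c] with t ht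
  simpa [abs_of_pos (exp_pos _)] using ht

lemma integrableOn_besselK_integrand (hz : 0 < z) (ν : ℝ) :
    IntegrableOn (fun t => exp (-z * cosh t) * cosh (ν * t)) (Ioi 0) := by
  refine IntegrableOn.congr_fun (((integrableOn_exp_neg_mul_cosh_add_mul hz ν).add
    (integrableOn_exp_neg_mul_cosh_add_mul hz (-ν))).div_const 2) (fun t _ => ?_)
    measurableSet_Ioi
  simp only [Pi.add_apply, cosh_eq (ν * t), exp_add, neg_mul]
  ring

lemma integrableOn_exp_neg_mul_cosh_mul_sinh (hz : 0 < z) (ν : ℝ) :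
    IntegrableOn (fun t => exp (-z * cosh t) * sinh (ν * t)) (Ioi 0) := by
  refine IntegrableOn.congr_fun (((integrableOn_exp_neg_mul_cosh_add_mul hz ν).sub
    (integrableOn_exp_neg_mul_cosh_add_mul hz (-ν))).div_const 2) (fun t _ => ?_)
    measurableSet_Ioi
  simp only [Pi.sub_apply, sinh_eq (ν * t), exp_add, neg_mul]
  ring

lemma hasDerivAt_exp_neg_mul_cosh_mul_sinh (z ν t : ℝ) :
    HasDerivAt (fun t => exp (-z * cosh t) * sinh ((ν + 1) * t))
      ((ν + 1) * (exp (-z * cosh t) * cosh ((ν + 1) * t)) -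
        z / 2 * (exp (-z * cosh t) * cosh ((ν + 2) * t) - exp (-z * cosh t) * cosh (ν * t)))
      t := by
  have hprod : sinh t * sinh ((ν + 1) * t) = (cosh ((ν + 2) * t) - cosh (ν * t)) / 2 := by
    rw [show (ν + 2) * t = (ν + 1) * t + t by ring, show ν * t = (ν + 1) * t - t by ring,
      cosh_add, cosh_sub]
    ring
  have h := (((hasDerivAt_cosh t).const_mul (-z)).exp).mul
    (((hasDerivAt_id t).const_mul (ν + 1)).sinh)
  refine h.congr_deriv ?_
  simp only [id, mul_one]
  linear_combination (-z * exp (-z * cosh t)) * hprod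

/-- Integrate over `(0, ∞)` the derivative of `t ↦ e^{-z cosh t} sinh((ν+1)t)`, which vanishes
at `0` and at `∞`. -/
theorem besselK_add_two (ν : ℝ) (hz : 0 < z) :
    besselK (ν + 2) z = besselK ν z + 2 * (ν + 1) / z * besselK (ν + 1) z := by
  set k : ℝ → ℝ → ℝ := fun μ t => exp (-z * cosh t) * cosh (μ * t)
  have hk : ∀ μ, IntegrableOn (k μ) (Ioi 0) := integrableOn_besselK_integrand hz
  have hderiv := hasDerivAt_exp_neg_mul_cosh_mul_sinh z ν
  have hint : IntegrableOn (fun t => (ν + 1) * k (ν + 1) t - z / 2 * (k (ν + 2) t - k ν t))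
      (Ioi 0) := ((hk _).const_mul _).sub (((hk _).sub (hk _)).const_mul _)
  have hlim := tendsto_zero_of_hasDerivAt_of_integrableOn_Ioi (fun t _ => hderiv t) hint
    (integrableOn_exp_neg_mul_cosh_mul_sinh hz (ν + 1))
  have hFTC : ∫ t in Ioi 0, ((ν + 1) * k (ν + 1) t - z / 2 * (k (ν + 2) t - k ν t)) =
      0 - exp (-z * cosh 0) * sinh ((ν + 1) * 0) :=
    integral_Ioi_of_hasDerivAt_of_tendsto' (fun t _ => hderiv t) hint hlim
  rw [integral_sub, integral_const_mul, integral_const_mul, integral_sub (hk _) (hk _)] at hFTC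
  · change (ν + 1) * besselK (ν + 1) z - z / 2 * (besselK (ν + 2) z - besselK ν z) =
      0 - exp (-z * cosh 0) * sinh ((ν + 1) * 0) at hFTC
    rw [mul_zero, sinh_zero, mul_zero, sub_zero] at hFTC
    field_simp
    linear_combination -2 * hFTC
  · exact (hk _).const_mul _
  · exact ((hk _).sub (hk _)).const_mul _

end BesselK

theorem rhoW_add_two (μ : ℝ) {b x : ℝ} (hb : 0 < b) (hx : 0 < x) :
    rhoW (μ + 2) b x = (μ + 1) / b * rhoW (μ + 1) b x + x * rhoW μ b x := by
  have hs : 0 < √x := sqrt_pos.2 hx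
  have hpow₂ : x ^ ((μ + 2) / 2) = x ^ (μ / 2) * x := by
    rw [show (μ + 2) / 2 = μ / 2 + 1 by ring, rpow_add hx, rpow_one]
  have hpow₁ : x ^ ((μ + 2) / 2) = x ^ ((μ + 1) / 2) * √x := by
    rw [show (μ + 2) / 2 = (μ + 1) / 2 + 1 / 2 by ring, rpow_add hx, sqrt_eq_rpow]
  have hcoef : √x * (2 * (μ + 1) / (2 * b * √x)) = (μ + 1) / b := by field_simp
  simp only [rhoW, besselK_add_two μ (by positivity : 0 < 2 * b * √x)]
  linear_combination besselK μ (2 * b * √x) * hpow₂ +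
    (2 * (μ + 1) / (2 * b * √x) * besselK (μ + 1) (2 * b * √x)) * hpow₁ +
    (x ^ ((μ + 1) / 2) * besselK (μ + 1) (2 * b * √x)) * hcoef

lemma poch_succ (t : ℝ) (k : ℕ) : poch t (k + 1) = poch t k * (t + k) :=
  prod_range_succ _ _

lemma poch_succ' (t : ℝ) (k : ℕ) : poch t (k + 1) = t * poch (t + 1) k := by
  simp only [poch, prod_range_succ', Nat.cast_add, Nat.cast_one, Nat.cast_zero, add_zero]
  rw [mul_comm]
  congr 1
  exact prod_congr rfl fun i _ => by ring

-- Truncated subtraction makes `lommelCoeff ν 0 0 = 1`, so vanishing for `m ≤ 2 * j` needs `m ≠ 0`.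
noncomputable def lommelCoeff (ν : ℝ) (m j : ℕ) : ℝ :=
  ((m - j - 1).choose j : ℝ) * poch (ν + j + 1) (m - 2 * j - 1)

noncomputable def lommel (ν : ℝ) (m : ℕ) (y : ℝ) : ℝ :=
  ∑ j ∈ range ((m + 1) / 2), lommelCoeff ν m j * y ^ j

lemma lommelCoeff_eq_zero {ν : ℝ} {m j : ℕ} (hm : m ≠ 0) (hj : m ≤ 2 * j) :
    lommelCoeff ν m j = 0 := by
  rw [lommelCoeff, Nat.choose_eq_zero_of_lt (by omega), Nat.cast_zero, zero_mul]

lemma lommel_eq_sum_range {ν : ℝ} {m N : ℕ} (hm : m ≠ 0) (hN : (m + 1) / 2 ≤ N) (y : ℝ) :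
    lommel ν m y = ∑ j ∈ range N, lommelCoeff ν m j * y ^ j := by
  refine sum_subset (range_subset_range.2 hN) fun j _ hj => ?_
  rw [lommelCoeff_eq_zero hm (by simp only [Finset.mem_range] at hj; omega), zero_mul]

lemma lommelCoeff_add_two_zero (ν : ℝ) (m : ℕ) :
    lommelCoeff ν (m + 2) 0 = (ν + m + 1) * lommelCoeff ν (m + 1) 0 := by
  simp only [lommelCoeff, Nat.choose_zero_right, Nat.cast_one, one_mul, Nat.cast_zero,
    add_zero, mul_zero, Nat.sub_zero, Nat.add_sub_cancel, show m + 2 - 1 = m + 1 by omega,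
    poch_succ]
  ring

lemma lommelCoeff_two_mul_add (ν : ℝ) (j k : ℕ) :
    lommelCoeff ν (2 * j + 1 + k) j = ((j + k).choose j : ℝ) * poch (ν + j + 1) k := by
  rw [lommelCoeff, show 2 * j + 1 + k - j - 1 = j + k by omega,
    show 2 * j + 1 + k - 2 * j - 1 = k by omega]

lemma lommelCoeff_add_two_succ (ν : ℝ) {m j : ℕ} (h : 2 * j + 1 ≤ m) :
    lommelCoeff ν (m + 2) (j + 1) =
      lommelCoeff ν m j + (ν + m + 1) * lommelCoeff ν (m + 1) (j + 1) := by
  obtain ⟨k, rfl⟩ := Nat.exists_eq_add_of_le h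
  rw [show 2 * j + 1 + k + 2 = 2 * (j + 1) + 1 + k by ring, lommelCoeff_two_mul_add,
    lommelCoeff_two_mul_add]
  cases k with
  | zero =>
    have h₀ : lommelCoeff ν (2 * j + 1 + 1) (j + 1) = 0 := lommelCoeff_eq_zero (by omega) (by omega)
    simp [h₀, poch]
  | succ k =>
    have hchoose :
        ((j + k + 1).choose (j + 1) : ℝ) * (j + 1) = ((j + k + 1).choose j) * (k + 1) := by
      exact_mod_cast (Nat.choose_succ_right_eq (j + k + 1) j).trans (by congr 1; omega)
    rw [show 2 * j + 1 + (k + 1) + 1 = 2 * (j + 1) + 1 + k by ring, lommelCoeff_two_mul_add,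
      show j + 1 + (k + 1) = (j + k + 1) + 1 by ring, Nat.choose_succ_succ', poch_succ, poch_succ',
      show j + 1 + k = j + k + 1 by ring,
      show ν + ((j + 1 : ℕ) : ℝ) + 1 = ν + j + 1 + 1 by push_cast; ring]
    push_cast
    linear_combination (-poch (ν + j + 1 + 1) k) * hchoose

lemma lommel_add_two (ν : ℝ) (m : ℕ) (y : ℝ) :
    lommel ν (m + 2) y = y * lommel ν m y + (ν + m + 1) * lommel ν (m + 1) y := by
  have h₂ : lommel ν (m + 2) y =
      ∑ j ∈ range ((m + 1) / 2 + 1), lommelCoeff ν (m + 2) j * y ^ j :=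
    lommel_eq_sum_range (by omega) (by omega) y
  have h₁ : lommel ν (m + 1) y =
      ∑ j ∈ range ((m + 1) / 2 + 1), lommelCoeff ν (m + 1) j * y ^ j :=
    lommel_eq_sum_range (by omega) (by omega) y
  rw [h₂, h₁, lommel, sum_range_succ', sum_range_succ', mul_add, mul_sum, mul_sum,
    lommelCoeff_add_two_zero, ← add_assoc, ← sum_add_distrib]
  congr 1
  · refine sum_congr rfl fun j hj => ?_
    rw [lommelCoeff_add_two_succ ν (by simp only [Finset.mem_range] at hj; omega)]
    ring
  · ring

lemma sPoly_eq_lommel (ν : ℝ) (m : ℕ) (y : ℝ) : sPoly ν m y = (-1) ^ (m + 1) * lommel ν m y := by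
  rcases eq_or_ne m 0 with rfl | hm
  · simp [sPoly, lommel]
  · rw [sPoly, if_neg hm, lommel]
    rfl

lemma rPoly_succ_eq_lommel (ν : ℝ) (m : ℕ) (y : ℝ) :
    rPoly ν (m + 1) y = (-1) ^ (m + 1) * (y * lommel (ν + 1) m y) := by
  rw [rPoly, if_neg m.succ_ne_zero, lommel, mul_sum (a := y)]
  congr 1
  refine sum_congr rfl fun j _ => ?_
  rw [lommelCoeff, show m + 1 - j - 2 = m - j - 1 by omega,
    show m + 1 - 2 * j - 2 = m - 2 * j - 1 by omega, show (ν + 1 + j + 1 : ℝ) = ν + j + 2 by ring]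
  ring

lemma sPoly_add_two (ν : ℝ) (m : ℕ) (y : ℝ) :
    sPoly ν (m + 2) y = y * sPoly ν m y - (ν + m + 1) * sPoly ν (m + 1) y := by
  simp only [sPoly_eq_lommel, lommel_add_two]
  ring

lemma rPoly_add_two (ν : ℝ) (m : ℕ) (y : ℝ) :
    rPoly ν (m + 2) y = y * rPoly ν m y - (ν + m + 1) * rPoly ν (m + 1) y := by
  cases m with
  | zero => simp [rPoly, poch]
  | succ m =>
    simp only [rPoly_succ_eq_lommel, lommel_add_two]
    push_cast
    ring

lemma neg_zpow_sub_mul_add_two_of_recurrence {b x μ : ℝ} (hb : b ≠ 0) (k : ℤ) (p : ℕ → ℝ)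
    (hp : ∀ n : ℕ, p (n + 2) = b ^ 2 * x * p n - (μ + n + 1) * p (n + 1)) (n : ℕ) :
    (-b) ^ (k - (n + 2 : ℕ)) * p (n + 2) =
      (μ + n + 1) / b * ((-b) ^ (k - (n + 1 : ℕ)) * p (n + 1)) + x * ((-b) ^ (k - n) * p n) := by
  have hb' : -b ≠ 0 := neg_ne_zero.2 hb
  have h₁ : (-b) ^ (k - (n + 1 : ℕ)) = (-b) ^ (k - (n + 2 : ℕ)) * (-b) := by
    rw [← zpow_add_one₀ hb']; push_cast; ring_nf
  have h₀ : (-b) ^ (k - n) = (-b) ^ (k - (n + 2 : ℕ)) * b ^ 2 := by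
    rw [← neg_sq, ← zpow_natCast, ← zpow_add₀ hb']; push_cast; ring_nf
  rw [hp, h₁, h₀]
  field_simp
  ring

theorem rhoW_expansion_general (ν b : ℝ) (hb : 0 < b) (m : ℕ) (x : ℝ) (hx : 0 < x) :
    rhoW (ν + m) b x =
      (-b) ^ (-(m : ℤ)) * rPoly ν m (b ^ 2 * x) * rhoW ν b x +
        (-b) ^ (1 - (m : ℤ)) * sPoly ν m (b ^ 2 * x) * rhoW (ν + 1) b x := by
  have hr := neg_zpow_sub_mul_add_two_of_recurrence hb.ne' 0 (rPoly ν · (b ^ 2 * x))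
    (rPoly_add_two ν · (b ^ 2 * x))
  have hs := neg_zpow_sub_mul_add_two_of_recurrence hb.ne' 1 (sPoly ν · (b ^ 2 * x))
    (sPoly_add_two ν · (b ^ 2 * x))
  simp only [zero_sub] at hr
  induction m using Nat.twoStepInduction with
  | zero => simp [rPoly, sPoly]
  | one => simp [rPoly, sPoly, poch]
  | more n ih₀ ih₁ =>
    have h : rhoW (ν + (n + 2 : ℕ)) b x =
        (ν + n + 1) / b * rhoW (ν + (n + 1 : ℕ)) b x + x * rhoW (ν + n) b x := by
      simpa only [Nat.cast_add, Nat.cast_ofNat, Nat.cast_one, add_assoc]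
        using rhoW_add_two (ν + n) hb hx
    linear_combination h + (ν + n + 1) / b * ih₁ + x * ih₀ - rhoW ν b x * hr n -
      rhoW (ν + 1) b x * hs n

/-- expansion of `ρ_{ν+m,b}` in terms of `ρ_{ν,b}` and `ρ_{ν+1,b}`. -/
theorem rhoW_expansion (ν b : ℝ) (hν : 0 < ν) (hb : 0 < b) (m : ℕ) (x : ℝ) (hx : 0 < x) :
    rhoW (ν + m) b x =
      (-b) ^ (-(m : ℤ)) * rPoly ν m (b ^ 2 * x) * rhoW ν b x +
        (-b) ^ (1 - (m : ℤ)) * sPoly ν m (b ^ 2 * x) * rhoW (ν + 1) b x :=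
  rhoW_expansion_general ν b hb m x hx
end

section
/- Let μ > −1, ν > 0, k > 0 and n ≥ 1. Then, as a → 0⁺ and b → 0⁺ with b/√a → k (subject to b > a > 0), the functions x ↦ Q_n^{μ,ν,a,b}(x/a) converge to the function x ↦ (−1)^n [(μ+ν+1)_n / Γ(μ+1)] · ₁F₂(−n; μ+ν+1, μ+1; k²x) · x^μ, uniformly for x in any compact subset of (0, ∞). -/
/-! Under `x ↦ x / a` each `ω_{μ+j,a}(x/a)` becomes `x^{μ+j} S_{μ+j}(a x)`, where
`S_t(u) = Σ_k u^k / (k! Γ(t+k+1))` is an entire power series, and the coefficient `(a² - b²)/a`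
becomes `a - (b/√a)²`. Hence `Q_n(x/a)` is a continuous function of `(a, b/√a, x)` on
`ℝ² × (0, ∞)`. Its value at `(0, k, x)` is the stated limit, because `S_t(0) = 1/Γ(t+1)` and
`Γ(s+j) = Γ(s) (s)_j`; continuity on `ℝ² × K` with `K` compact makes the convergence uniform
on `K`. -/

open MeasureTheory Real Filter Set Finset

noncomputable def besselISeries (t u : ℝ) : ℝ :=
  ∑' k : ℕ, u ^ k / (k.factorial * Gamma (t + k + 1))

lemma poch_pos {t : ℝ} (ht : 0 < t) (j : ℕ) : 0 < poch t j :=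
  Finset.prod_pos fun i _ => by positivity

lemma pow_le_poch {t : ℝ} (ht : 0 ≤ t) (j : ℕ) : t ^ j ≤ poch t j := by
  calc t ^ j = ∏ _i ∈ range j, t := by simp
    _ ≤ poch t j := prod_le_prod (fun _ _ => ht) fun i _ => le_add_of_nonneg_right i.cast_nonneg

lemma poch_neg_natCast (n j : ℕ) : poch (-(n : ℝ)) j = (-1) ^ j * n.descFactorial j := by
  have h := prod_neg (s := range j) fun i : ℕ => (n : ℝ) - i
  rw [card_range] at h
  rw [← descPochhammer_eval_eq_descFactorial, descPochhammer_eval_eq_prod_range, poch, ← h]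
  exact prod_congr rfl fun _ _ => by ring

lemma Gamma_add_natCast_eq_mul_poch {s : ℝ} (hs : 0 < s) (j : ℕ) :
    Gamma (s + j) = Gamma s * poch s j := by
  induction j with
  | zero => simp [poch]
  | succ j ih =>
    rw [Nat.cast_succ, ← add_assoc, Gamma_add_one (by positivity), ih, poch, poch,
      prod_range_succ]
    ring

lemma besselISeries_zero (t : ℝ) : besselISeries t 0 = (Gamma (t + 1))⁻¹ := by
  rw [besselISeries, tsum_eq_single 0 fun k hk => by simp [zero_pow hk]]
  simp

lemma continuousOn_besselISeries {t : ℝ} (ht : -1 < t) (M : ℝ) :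
    ContinuousOn (besselISeries t) (Icc (-M) M) := by
  have ht1 : 0 < t + 1 := by linarith
  have hΓ1 : 0 < Gamma (t + 1) := Gamma_pos_of_pos ht1
  refine continuousOn_tsum (fun k => ((continuous_pow k).div_const _).continuousOn)
    ((summable_pow_div_factorial (M / (t + 1))).mul_right (Gamma (t + 1))⁻¹) fun k u hu => ?_
  have hΓ : Gamma (t + 1) * (t + 1) ^ k ≤ Gamma (t + k + 1) := by
    rw [add_right_comm, Gamma_add_natCast_eq_mul_poch ht1]
    exact mul_le_mul_of_nonneg_left (pow_le_poch ht1.le k) hΓ1.le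
  have hΓk : 0 < Gamma (t + k + 1) := (mul_pos hΓ1 (pow_pos ht1 k)).trans_le hΓ
  have hu' : |u| ≤ M := abs_le.2 hu
  have hM : 0 ≤ M := (abs_nonneg u).trans hu'
  calc ‖u ^ k / (k.factorial * Gamma (t + k + 1))‖
      = |u| ^ k / (k.factorial * Gamma (t + k + 1)) := by
        rw [norm_div, norm_pow, Real.norm_eq_abs, Real.norm_of_nonneg (by positivity)]
    _ ≤ M ^ k / (k.factorial * (Gamma (t + 1) * (t + 1) ^ k)) := by gcongr
    _ = (M / (t + 1)) ^ k / k.factorial * (Gamma (t + 1))⁻¹ := by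
        rw [div_pow]; field_simp

lemma continuous_besselISeries {t : ℝ} (ht : -1 < t) : Continuous (besselISeries t) :=
  continuous_iff_continuousAt.2 fun u =>
    (continuousOn_besselISeries ht (|u| + 1)).continuousAt
      (Icc_mem_nhds (by linarith [neg_abs_le u]) (by linarith [le_abs_self u]))

lemma omegaW_div {a x : ℝ} (t : ℝ) (ha : 0 < a) (hx : 0 < x) :
    omegaW t a (x / a) = x ^ t * besselISeries t (a * x) := by
  have hxa : 0 < x / a := div_pos hx ha
  have hax : 0 < a * x := mul_pos ha hx
  have half : 2 * a * √(x / a) / 2 = √(a * x) := by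
    rw [show a * x = a ^ 2 * (x / a) by field_simp, sqrt_mul (sq_nonneg a), sqrt_sq ha.le]
    ring
  have quarter : (2 * a * √(x / a)) ^ 2 / 4 = a * x := by
    rw [mul_pow, sq_sqrt hxa.le]; field_simp; norm_num
  have power : (x / a) ^ (t / 2) * √(a * x) ^ t = x ^ t := by
    rw [sqrt_eq_rpow, ← rpow_mul hax.le, show 1 / 2 * t = t / 2 by ring,
      ← mul_rpow hxa.le hax.le, show x / a * (a * x) = x ^ (2 : ℝ) by rw [rpow_two]; field_simp,
      ← rpow_mul hx.le]
    ring_nf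
  rw [omegaW, besselI, half, quarter, ← mul_assoc, power, besselISeries]

/-- `Q_n^{μ,ν,a,b}(x/a)` written in the variables `(a, b/√a)`, in which it extends continuously
to `a = 0`. -/
noncomputable def QmopRescaled (μ ν : ℝ) (n : ℕ) (p : ℝ × ℝ) (x : ℝ) : ℝ :=
  (-1 : ℝ) ^ n * ∑ j ∈ range (n + 1),
    (n.choose j : ℝ) * (Gamma (μ + ν + 1 + n) / Gamma (μ + ν + 1 + j)) *
      (p.1 - p.2 ^ 2) ^ j * (x ^ (μ + j) * besselISeries (μ + j) (p.1 * x))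

lemma Qmop_div_eq_QmopRescaled (μ ν : ℝ) (n : ℕ) {a x : ℝ} (b : ℝ) (ha : 0 < a) (hx : 0 < x) :
    Qmop μ ν a b n (x / a) = QmopRescaled μ ν n (a, b / √a) x := by
  have hc : (a ^ 2 - b ^ 2) / a = a - (b / √a) ^ 2 := by
    rw [div_pow, sq_sqrt ha.le]; field_simp
  simp only [Qmop, QmopRescaled, omegaW_div _ ha hx, hc]

lemma continuousOn_QmopRescaled {μ : ℝ} (hμ : -1 < μ) (ν : ℝ) (n : ℕ) :
    ContinuousOn ↿(QmopRescaled μ ν n) (Set.univ ×ˢ Set.Ioi 0) := by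
  refine continuousOn_const.mul (continuousOn_finsetSum _ fun j _ => ?_)
  have hpow : ContinuousOn (fun q : (ℝ × ℝ) × ℝ => q.2 ^ (μ + j)) (Set.univ ×ˢ Set.Ioi 0) :=
    continuousOn_snd.rpow_const fun q hq => Or.inl hq.2.ne'
  have hseries : Continuous fun q : (ℝ × ℝ) × ℝ => besselISeries (μ + j) (q.1.1 * q.2) :=
    (continuous_besselISeries (by linarith [j.cast_nonneg (α := ℝ)])).comp (by fun_prop)
  exact (Continuous.continuousOn (by fun_prop)).mul (hpow.mul hseries.continuousOn)

lemma QmopRescaled_zero {μ ν : ℝ} (hμ : -1 < μ) (hν : 0 < ν) (n : ℕ) (k : ℝ) {x : ℝ}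
    (hx : 0 < x) :
    QmopRescaled μ ν n (0, k) x =
      (-1 : ℝ) ^ n * (poch (μ + ν + 1) n / Gamma (μ + 1)) *
        (∑ j ∈ range (n + 1), poch (-(n : ℝ)) j /
          (poch (μ + ν + 1) j * poch (μ + 1) j * (j.factorial : ℝ)) * (k ^ 2 * x) ^ j) * x ^ μ := by
  have hs : 0 < μ + ν + 1 := by linarith
  have hμ1 : 0 < μ + 1 := by linarith
  simp only [QmopRescaled, Finset.mul_sum, Finset.sum_mul]
  refine Finset.sum_congr rfl fun j _ => ?_
  have hΓs := Gamma_pos_of_pos hs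
  have hΓμ := Gamma_pos_of_pos hμ1
  have hps := poch_pos hs j
  have hpμ := poch_pos hμ1 j
  rw [zero_mul, besselISeries_zero, Gamma_add_natCast_eq_mul_poch hs,
    Gamma_add_natCast_eq_mul_poch hs, add_right_comm μ (j : ℝ), Gamma_add_natCast_eq_mul_poch hμ1,
    poch_neg_natCast, Nat.descFactorial_eq_factorial_mul_choose, rpow_add hx, rpow_natCast]
  push_cast
  field_simp
  ring

theorem IsCompact.exists_forall_dist_lt_of_continuousOn {α β E : Type*} [PseudoMetricSpace α]
    [TopologicalSpace β] [PseudoMetricSpace E] {f : α → β → E} {k : Set β} (hk : IsCompact k)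
    (hf : ContinuousOn ↿f (univ ×ˢ k)) (q : α) {ε : ℝ} (hε : 0 < ε) :
    ∃ δ > 0, ∀ p, dist p q < δ → ∀ x ∈ k, dist (f p x) (f q x) < ε := by
  obtain ⟨v, hv, hvε⟩ := hk.mem_uniformity_of_prod hf (mem_univ q) (Metric.dist_mem_uniformity hε)
  rw [nhdsWithin_univ] at hv
  obtain ⟨δ, hδ, hball⟩ := Metric.mem_nhds_iff.1 hv
  exact ⟨δ, hδ, fun p hp x hx => hvε p (hball hp) x hx⟩

theorem Qmop_limit_small_a_general (μ ν k : ℝ) (hμ : -1 < μ) (hν : 0 < ν)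
    (n : ℕ) :
    ∀ K : Set ℝ, IsCompact K → K ⊆ Set.Ioi 0 → ∀ ε > (0 : ℝ), ∃ δ > (0 : ℝ),
      ∀ a b : ℝ, 0 < a → a < b → a < δ → |b / Real.sqrt a - k| < δ →
        ∀ x ∈ K,
          |Qmop μ ν a b n (x / a) -
            (-1 : ℝ) ^ n * (poch (μ + ν + 1) n / Real.Gamma (μ + 1)) *
              (∑ j ∈ Finset.range (n + 1),
                poch (-(n : ℝ)) j /
                  (poch (μ + ν + 1) j * poch (μ + 1) j * (Nat.factorial j : ℝ)) *
                  (k ^ 2 * x) ^ j) * x ^ μ| < ε := by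
  intro K hK hKpos ε hε
  obtain ⟨δ, hδ, hclose⟩ := hK.exists_forall_dist_lt_of_continuousOn
    ((continuousOn_QmopRescaled hμ ν n).mono (prod_mono subset_rfl hKpos)) (0, k) hε
  refine ⟨δ, hδ, fun a b ha _ haδ hbδ x hx => ?_⟩
  have hdist : dist (a, b / √a) (0, k) < δ := by
    rw [Prod.dist_eq, Real.dist_eq, Real.dist_eq, sub_zero, abs_of_pos ha]
    exact max_lt haδ hbδ
  rw [Qmop_div_eq_QmopRescaled μ ν n b ha (hKpos hx), ← QmopRescaled_zero hμ hν n k (hKpos hx)]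
  exact hclose _ hdist x hx

/-- limiting form of `Q_n(x/a)` as `a → 0⁺`, `b → 0⁺` with `b/√a → k`,
uniformly on compact subsets of `(0,∞)`. -/
theorem Qmop_limit_small_a (μ ν k : ℝ) (hμ : -1 < μ) (hν : 0 < ν) (hk : 0 < k)
    (n : ℕ) (hn : 1 ≤ n) :
    ∀ K : Set ℝ, IsCompact K → K ⊆ Set.Ioi 0 → ∀ ε > (0 : ℝ), ∃ δ > (0 : ℝ),
      ∀ a b : ℝ, 0 < a → a < b → a < δ → |b / Real.sqrt a - k| < δ →
        ∀ x ∈ K,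
          |Qmop μ ν a b n (x / a) -
            (-1 : ℝ) ^ n * (poch (μ + ν + 1) n / Real.Gamma (μ + 1)) *
              (∑ j ∈ Finset.range (n + 1),
                poch (-(n : ℝ)) j /
                  (poch (μ + ν + 1) j * poch (μ + 1) j * (Nat.factorial j : ℝ)) *
                  (k ^ 2 * x) ^ j) * x ^ μ| < ε :=
  Qmop_limit_small_a_general μ ν k hμ hν n
end
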